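/- With the partial specializations Ξ_Δ (Δ ⊆ C) of the generic coefficients of the system ags(P̃) as above, the ideal I_{Δ,Y} generated by Ξ_Δ(P_1),…,Ξ_Δ(P_L) in D_Δ[Y^{±}], intersected with K_Δ[C̄\Δ ∪ Ξ_Δ(𝐜)], is a prime ideal, where K_Δ is the fraction field ℚ(Ξ(C̄ ∩ Δ)) and 𝐜 = {c_1,…,c_L} are the distinguished (leading) coefficients. -/

import Mathlib

/-!
The contraction of `I = (P_1, …, P_L)` to `K[W]` is the kernel of evaluation at the generic zero
`X (w l) ↦ -Q_l / T_l` (all other indeterminates fixed), hence prime because the Laurent polynomial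
ring is a domain. Applying this evaluation to coefficients kills every `P_l`, since the tails `Q_l`
do not involve the leading indeterminates; conversely, modulo `I` each `X (w l)` is congruent to
`-Q_l / T_l`, so the evaluation agrees with the inclusion modulo `I`.
-/

open MvPolynomial AddMonoidAlgebra

theorem Ideal.comap_eq_ker_of_factorization {R A B : Type*} [CommRing R] [CommRing A]
    [CommRing B] {f : R →+* A} {I : Ideal A} {θ : R →+* B} (g : A →+* B)
    (hI : I ≤ RingHom.ker g) (hgf : g.comp f = θ) (ψ : B →+* A ⧸ I)
    (hψ : ψ.comp θ = (Ideal.Quotient.mk I).comp f) :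
    I.comap f = RingHom.ker θ := by
  ext p
  rw [Ideal.mem_comap, RingHom.mem_ker]
  constructor
  · intro hp
    rw [← hgf, RingHom.comp_apply]
    exact hI hp
  · intro hp
    rw [← Ideal.Quotient.eq_zero_iff_mem, ← RingHom.comp_apply, ← hψ, RingHom.comp_apply, hp,
      map_zero]

namespace AddMonoidAlgebra

variable {R G : Type*} [CommRing R] [AddCommMonoid G]

noncomputable def coeffSubst (θ : R →+* R[G]) : R[G] →+* R[G] :=
  liftNCRingHom θ (of R G) fun _ _ => Commute.all _ _

variable (θ : R →+* R[G])

theorem coeffSubst_single (a : G) (b : R) :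
    coeffSubst θ (single a b) = θ b * single a 1 :=
  liftNC_single _ _ a b

theorem coeffSubst_algebraMap (p : R) : coeffSubst θ (algebraMap R R[G] p) = θ p :=
  (coeffSubst_single θ 0 p).trans (mul_one _)

theorem coeffSubst_eq_self {q : R[G]}
    (hq : ∀ e, θ (q.coeff e) = algebraMap R R[G] (q.coeff e)) : coeffSubst θ q = q := by
  have hq_sum : q = q.coeff.sum fun a b => single a b := (sum_coeff_single q).symm
  conv_lhs => rw [hq_sum, map_finsuppSum]
  conv_rhs => rw [hq_sum]
  refine Finsupp.sum_congr fun a _ => ?_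
  rw [coeffSubst_single, hq]
  exact (single_mul_single ..).trans (by rw [zero_add, mul_one]; rfl)

end AddMonoidAlgebra

section GenericZero

variable {K W ι G : Type*} [CommRing K] [AddCommGroup G]
  (w : ι → W) (T : ι → G) (Q : ι → (MvPolynomial W K)[G])

/-- The generic zero `ε^Δ` of the system `X (w l) * T l + Q l = 0`. -/
noncomputable def genericZero : W → (MvPolynomial W K)[G] :=
  Function.extend w (fun l => -(Q l * single (-T l) 1))
    fun v => algebraMap (MvPolynomial W K) _ (X v)

noncomputable def evalGenericZero : MvPolynomial W K →+* (MvPolynomial W K)[G] :=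
  (aeval (R := K) (genericZero w T Q)).toRingHom

theorem genericZero_apply_leading (hw : Function.Injective w) (l : ι) :
    genericZero w T Q (w l) = -(Q l * single (-T l) 1) :=
  hw.extend_apply ..

theorem genericZero_apply_of_notMem_range {v : W} (hv : v ∉ Set.range w) :
    genericZero w T Q v = algebraMap (MvPolynomial W K) _ (X v) :=
  Function.extend_apply' _ _ _ hv

theorem evalGenericZero_X (v : W) : evalGenericZero w T Q (X v) = genericZero w T Q v :=
  aeval_X _ v

theorem evalGenericZero_of_disjoint {p : MvPolynomial W K} (hp : ∀ l, w l ∉ p.vars) :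
    evalGenericZero w T Q p = algebraMap _ (MvPolynomial W K)[G] p := by
  calc evalGenericZero w T Q p
      = aeval (algebraMap _ (MvPolynomial W K)[G] ∘ X) p := by
        refine eval₂Hom_congr' rfl (fun v hv _ => ?_) rfl
        exact genericZero_apply_of_notMem_range w T Q fun ⟨l, hl⟩ => hp l (hl ▸ hv)
    _ = algebraMap _ _ p := by rw [aeval_algebraMap_apply, aeval_X_left_apply]

theorem coeffSubst_evalGenericZero_leading_add_eq_zero (hw : Function.Injective w)
    (hQ : ∀ l (e : G) (l' : ι), w l' ∉ ((Q l).coeff e).vars) (l : ι) :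
    coeffSubst (G := G) (evalGenericZero w T Q)
      (single (T l) (X (w l)) + Q l) = 0 := by
  have hQ_fixed : coeffSubst (G := G) (evalGenericZero w T Q) (Q l) = Q l :=
    coeffSubst_eq_self _ fun e => evalGenericZero_of_disjoint w T Q (hQ l e)
  rw [map_add, coeffSubst_single, hQ_fixed, evalGenericZero_X,
    genericZero_apply_leading w T Q hw, neg_mul, mul_assoc, single_mul_single, neg_add_cancel,
    one_mul, ← AddMonoidAlgebra.one_def, mul_one, neg_add_cancel]

theorem mk_comp_evalGenericZero (hw : Function.Injective w) {I : Ideal (MvPolynomial W K)[G]}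
    (hI : ∀ l, single (T l) (X (w l)) + Q l ∈ I) :
    (Ideal.Quotient.mk I).comp (evalGenericZero w T Q) =
      (Ideal.Quotient.mk I).comp (algebraMap _ _) := by
  have h := algHom_ext (f := (Ideal.Quotient.mkₐ K I).comp (aeval (genericZero w T Q)))
    (g := (Ideal.Quotient.mkₐ K I).comp (IsScalarTower.toAlgHom K _ _)) fun v => by
      simp only [AlgHom.comp_apply, aeval_X, IsScalarTower.coe_toAlgHom',
        Ideal.Quotient.mkₐ_eq_mk]
      by_cases hv : v ∈ Set.range w
      · obtain ⟨l, rfl⟩ := hv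
        have h_lead : single (T l) (X (w l)) * single (-T l) 1 =
            algebraMap (MvPolynomial W K) (MvPolynomial W K)[G] (X (w l)) := by
          rw [single_mul_single, add_neg_cancel, mul_one]
          rfl
        refine Ideal.Quotient.eq.mpr ?_
        rw [genericZero_apply_leading w T Q hw]
        convert I.mul_mem_right (-single (-T l) 1) (hI l) using 1
        linear_combination h_lead
      · rw [genericZero_apply_of_notMem_range w T Q hv]
  exact RingHom.ext fun p => AlgHom.congr_fun h p

end GenericZero

/-- Lemma lem-prime: primality of the partially specialized
elimination ideal.  After applying a partial specialization `Ξ_Δ` to the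
generic system `P_l = c_l T_l + Σ_h c_{l,h} T_{l,h}`, the polynomials have the
form `Ξ_Δ(P_l) = x_l T_l + Q_l` over the field `K_Δ = ℚ(Ξ(C̄ ∩ Δ))`, where the
(possibly specialized) leading coefficients `x_l = Ξ_Δ(c_l)` — the untouched
`c_l`, or derivatives `∂^k 𝔞_i` of fresh differential indeterminates — are
pairwise distinct indeterminates of the variable set
`W = C̄\Δ ∪ Ξ_Δ(𝐜)`, and the tails `Q_l` do not involve any of these leading
indeterminates.  Then the ideal generated by the `Ξ_Δ(P_l)` in
`K_Δ[W][Y^{±}]`, intersected with `K_Δ[W]`, is a prime ideal. -/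
theorem partially_specialized_elimination_ideal_isPrime
    (K : Type*) [Field K] (W : Type*) (m L : ℕ)
    (w : Fin L → W) (hw : Function.Injective w)
    (T : Fin L → (Fin m →₀ ℤ))
    (Q : Fin L → AddMonoidAlgebra (MvPolynomial W K) (Fin m →₀ ℤ))
    (hQ : ∀ l (e : Fin m →₀ ℤ) (l' : Fin L), w l' ∉ ((Q l).coeff e).vars)
    (P : Fin L → AddMonoidAlgebra (MvPolynomial W K) (Fin m →₀ ℤ))
    (hP : ∀ l, P l =
      AddMonoidAlgebra.single (T l) (MvPolynomial.X (w l)) + Q l) :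
    (Ideal.comap
        (algebraMap (MvPolynomial W K)
          (AddMonoidAlgebra (MvPolynomial W K) (Fin m →₀ ℤ)))
        (Ideal.span (Set.range P))).IsPrime := by
  set θ := evalGenericZero w T Q
  have hP_mem : ∀ l, single (T l) (X (w l)) + Q l ∈ Ideal.span (Set.range P) :=
    fun l => hP l ▸ Ideal.subset_span ⟨l, rfl⟩
  have hP_ker : Ideal.span (Set.range P) ≤ RingHom.ker (coeffSubst θ) := by
    rw [Ideal.span_le]
    rintro _ ⟨l, rfl⟩
    rw [SetLike.mem_coe, RingHom.mem_ker, hP]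
    exact coeffSubst_evalGenericZero_leading_add_eq_zero w T Q hw hQ l
  rw [Ideal.comap_eq_ker_of_factorization (coeffSubst θ) hP_ker
    (RingHom.ext (coeffSubst_algebraMap θ)) (Ideal.Quotient.mk _)
    (mk_comp_evalGenericZero w T Q hw hP_mem)]
  exact RingHom.ker_isPrime θ
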